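/- Optimization lemma (three-group guessing): Let X, Y, Z be disjoint finite sets with |Z| ≥ 2, and maximize min{p_X + p_Y, p_Y + p_Z, p_Z + p_X, 2·p_Z} over nonnegative reals p_X, p_Y, p_Z subject to |X|·p_X + |Y|·p_Y + |Z|·p_Z = 1. The maximum value equals max{ 2/(|X|+|Y|+|Z|), 1/(|X|+|Z|), 1/(|Y|+|Z|) }. -/

import Mathlib

/-!
Each of the four terms of the minimum bounds it from above, so any nonnegative combination of
them whose coefficients of `pX, pY, pZ` stay below the weights `x, y, z` bounds the total weight
times the minimum by `1` (weak LP duality). The three regimes `x + z ≤ y`, `y + z ≤ x` and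
"otherwise" each admit such a dual certificate matching one of the three values, and each value
is attained: by the uniform assignment, or by putting equal mass on two of the groups.
-/

namespace ThreeGroupGuessing

def guessingValue (pX pY pZ : ℝ) : ℝ :=
  min (min (pX + pY) (pY + pZ)) (min (pZ + pX) (2 * pZ))

def guessingValues (x y z : ℝ) : Set ℝ :=
  { m | ∃ pX pY pZ : ℝ, 0 ≤ pX ∧ 0 ≤ pY ∧ 0 ≤ pZ ∧
      x * pX + y * pY + z * pZ = 1 ∧ m = guessingValue pX pY pZ }

variable {x y z : ℝ}

lemma guessingValue_swap (pX pY pZ : ℝ) : guessingValue pY pX pZ = guessingValue pX pY pZ := by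
  unfold guessingValue
  rw [add_comm pY pX, add_comm pX pZ, add_comm pZ pY, min_min_min_comm]

lemma guessingValues_swap : guessingValues y x z = guessingValues x y z := by
  ext m
  constructor <;>
  · rintro ⟨pX, pY, pZ, hpX, hpY, hpZ, hsum, rfl⟩
    exact ⟨pY, pX, pZ, hpY, hpX, hpZ, by linarith, guessingValue_swap _ _ _⟩

lemma two_div_mem_guessingValues (h : 0 < x + y + z) : 2 / (x + y + z) ∈ guessingValues x y z := by
  have ht : 0 ≤ 1 / (x + y + z) := by positivity
  refine ⟨_, _, _, ht, ht, ht, by field_simp, ?_⟩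
  simp only [guessingValue, ← two_mul, min_self]
  ring

lemma one_div_mem_guessingValues (h : 0 < x + z) : 1 / (x + z) ∈ guessingValues x y z := by
  have ht : 0 ≤ 1 / (x + z) := by positivity
  refine ⟨_, 0, _, ht, le_rfl, ht, by field_simp; ring, ?_⟩
  simp only [guessingValue, add_zero, zero_add, ← two_mul, min_self]
  exact (min_eq_left (by linarith)).symm

lemma mul_guessingValue_le_one {a b c d pX pY pZ : ℝ}
    (ha : 0 ≤ a) (hb : 0 ≤ b) (hc : 0 ≤ c) (hd : 0 ≤ d)
    (hac : a + c ≤ x) (hab : a + b ≤ y) (hbcd : b + c + 2 * d ≤ z)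
    (hpX : 0 ≤ pX) (hpY : 0 ≤ pY) (hpZ : 0 ≤ pZ) (hsum : x * pX + y * pY + z * pZ = 1) :
    (a + b + c + d) * guessingValue pX pY pZ ≤ 1 := by
  set M := guessingValue pX pY pZ
  have hXY : M ≤ pX + pY := (min_le_left _ _).trans (min_le_left _ _)
  have hYZ : M ≤ pY + pZ := (min_le_left _ _).trans (min_le_right _ _)
  have hZX : M ≤ pZ + pX := (min_le_right _ _).trans (min_le_left _ _)
  have hZZ : M ≤ 2 * pZ := (min_le_right _ _).trans (min_le_right _ _)
  calc (a + b + c + d) * M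
      ≤ a * (pX + pY) + b * (pY + pZ) + c * (pZ + pX) + d * (2 * pZ) := by
        linarith [mul_le_mul_of_nonneg_left hXY ha, mul_le_mul_of_nonneg_left hYZ hb,
          mul_le_mul_of_nonneg_left hZX hc, mul_le_mul_of_nonneg_left hZZ hd]
    _ = (a + c) * pX + (a + b) * pY + (b + c + 2 * d) * pZ := by ring
    _ ≤ x * pX + y * pY + z * pZ := by gcongr
    _ = 1 := hsum

lemma le_max_of_mem_guessingValues (hx : 0 ≤ x) (hy : 0 ≤ y) (hz : 0 < z) {m : ℝ}
    (hm : m ∈ guessingValues x y z) :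
    m ≤ max (max (2 / (x + y + z)) (1 / (x + z))) (1 / (y + z)) := by
  obtain ⟨pX, pY, pZ, hpX, hpY, hpZ, hsum, rfl⟩ := hm
  have dual {a b c d : ℝ} (ha : 0 ≤ a) (hb : 0 ≤ b) (hc : 0 ≤ c) (hd : 0 ≤ d)
      (hac : a + c ≤ x) (hab : a + b ≤ y) (hbcd : b + c + 2 * d ≤ z) :=
    mul_guessingValue_le_one ha hb hc hd hac hab hbcd hpX hpY hpZ hsum
  rcases le_or_gt (x + z) y with hxz | hxz
  · refine le_max_of_le_left (le_max_of_le_right ?_)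
    rw [le_div_iff₀ (by positivity)]
    linarith [dual hx hz.le le_rfl le_rfl (by linarith) hxz (by linarith)]
  rcases le_or_gt (y + z) x with hyz | hyz
  · refine le_max_of_le_right ?_
    rw [le_div_iff₀ (by positivity)]
    linarith [dual hy le_rfl hz.le le_rfl (by linarith) (by linarith) (by linarith)]
  refine le_max_of_le_left (le_max_of_le_left ?_)
  rw [le_div_iff₀ (by positivity)]
  rcases le_or_gt (x + y) z with hxy | hxy
  · linarith [dual le_rfl hy hx (by linarith : 0 ≤ (z - x - y) / 2)
      (by linarith) (by linarith) (by linarith)]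
  · linarith [dual (by linarith : 0 ≤ (x + y - z) / 2) (by linarith : 0 ≤ (y + z - x) / 2)
      (by linarith : 0 ≤ (x + z - y) / 2) le_rfl (by linarith) (by linarith) (by linarith)]

theorem isGreatest_guessingValues (hx : 0 ≤ x) (hy : 0 ≤ y) (hz : 0 < z) :
    IsGreatest (guessingValues x y z)
      (max (max (2 / (x + y + z)) (1 / (x + z))) (1 / (y + z))) := by
  refine ⟨?_, fun m hm ↦ le_max_of_mem_guessingValues hx hy hz hm⟩
  have hXZ := one_div_mem_guessingValues (y := y) (by positivity : 0 < x + z)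
  have hYZ := one_div_mem_guessingValues (y := x) (by positivity : 0 < y + z)
  rw [guessingValues_swap] at hYZ
  rcases max_choice (max (2 / (x + y + z)) (1 / (x + z))) (1 / (y + z)) with h | h <;> rw [h]
  · rcases max_choice (2 / (x + y + z)) (1 / (x + z)) with h' | h' <;> rw [h']
    · exact two_div_mem_guessingValues (by positivity)
    · exact hXZ
  · exact hYZ

end ThreeGroupGuessing

theorem three_group_guessing_lp {α : Type}
    (X Y Z : Finset α)
    (hZ : 2 ≤ Z.card) :
    IsGreatest
      { m : ℝ | ∃ pX pY pZ : ℝ, 0 ≤ pX ∧ 0 ≤ pY ∧ 0 ≤ pZ ∧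
          (X.card : ℝ) * pX + (Y.card : ℝ) * pY + (Z.card : ℝ) * pZ = 1 ∧
          m = min (min (pX + pY) (pY + pZ)) (min (pZ + pX) (2 * pZ)) }
      (max (max (2 / ((X.card : ℝ) + Y.card + Z.card))
                (1 / ((X.card : ℝ) + Z.card)))
           (1 / ((Y.card : ℝ) + Z.card))) :=
  ThreeGroupGuessing.isGreatest_guessingValues (Nat.cast_nonneg _) (Nat.cast_nonneg _)
    (by exact_mod_cast (by omega : 0 < Z.card))
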